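/- arXiv:2108.00546 — 4 statements merged into one kernel-verified Lean document; each statement's English description precedes it below -/
import Mathlib

section
/- Let a, b, c, d, e > 0, k ≥ 0, 0 < p < 1, 0 < m < 1, and let (u*, v*) with u* > 0, v* > 0 be a coexistence equilibrium, i.e., a/(1+k·v*) − b·u* − c·u*^(p−1)·v*^m = 0 and −d + e·u*^p·v*^(m−1) = 0. Assume b > c·(1−p)·u*^(p−2)·v*^m. Then the Jacobian matrix J at (u*, v*) satisfies trace(J) < 0 and det(J) > 0, and consequently every complex root z of the characteristic polynomial z² − trace(J)·z + det(J) has strictly negative real part. -/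
lemma rh_aux (T D : ℝ) (hT : T < 0) (hD : 0 < D) (z : ℂ)
    (hz : z ^ 2 - (T : ℂ) * z + (D : ℂ) = 0) : z.re < 0 := by
  set x := z.re with hx
  set y := z.im with hy
  have hre : x ^ 2 - y ^ 2 - T * x + D = 0 := by
    have := congrArg Complex.re hz
    simp [pow_two, Complex.mul_re, Complex.sub_re, Complex.add_re, Complex.ofReal_re,
      Complex.ofReal_im, ← hx, ← hy] at this
    nlinarith [this]
  have him : (2 * x - T) * y = 0 := by
    have := congrArg Complex.im hz
    simp [pow_two, Complex.mul_im, Complex.sub_im, Complex.add_im, Complex.ofReal_re,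
      Complex.ofReal_im, ← hx, ← hy] at this
    nlinarith [this]
  rcases mul_eq_zero.mp him with h | h
  · linarith
  · by_contra hxe
    push_neg at hxe
    nlinarith
/-- At a coexistence equilibrium `(u*, v*)` of the fear model with
`b > c·(1-p)·u*^(p-2)·v*^m`, the Jacobian `J` satisfies `trace J < 0` and `det J > 0`,
and consequently every complex root of `z² - trace(J)·z + det(J)` has strictly negative
real part (Routh–Hurwitz). -/
theorem coexistence_routh_hurwitz
    (a b c d e k p m ustar vstar : ℝ)
    (ha : 0 < a) (hb : 0 < b) (hc : 0 < c) (hd : 0 < d) (he : 0 < e) (hk : 0 ≤ k)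
    (hp : 0 < p) (hp1 : p < 1) (hm : 0 < m) (hm1 : m < 1)
    (hu : 0 < ustar) (hv : 0 < vstar)
    (heq1 : a / (1 + k * vstar) - b * ustar - c * ustar ^ (p - 1) * vstar ^ m = 0)
    (heq2 : -d + e * ustar ^ p * vstar ^ (m - 1) = 0)
    (hbc : b > c * (1 - p) * ustar ^ (p - 2) * vstar ^ m)
    (J : Matrix (Fin 2) (Fin 2) ℝ)
    (hJ : J = !![a / (1 + k * vstar) - 2 * b * ustar - c * p * ustar ^ (p - 1) * vstar ^ m,
                 -(k * a * ustar) / (1 + k * vstar) ^ 2 - c * m * ustar ^ p * vstar ^ (m - 1);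
                 e * p * ustar ^ (p - 1) * vstar ^ m,
                 -d + e * m * ustar ^ p * vstar ^ (m - 1)]) :
    J.trace < 0 ∧ 0 < J.det ∧
      ∀ z : ℂ, z ^ 2 - (J.trace : ℂ) * z + (J.det : ℂ) = 0 → z.re < 0 := by
  have hden : (0:ℝ) < 1 + k * vstar := by positivity
  have hA : (0:ℝ) < ustar ^ (p - 1) * vstar ^ m := by positivity
  have hsplit : ustar ^ (p - 1) = ustar ^ (p - 2) * ustar := by
    rw [show p - 1 = (p - 2) + 1 by ring, Real.rpow_add hu, Real.rpow_one]
  have hJ11 : J 0 0 = (c * (1 - p) * ustar ^ (p - 2) * vstar ^ m - b) * ustar := by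
    rw [hJ]
    have h1 : a / (1 + k * vstar) = b * ustar + c * ustar ^ (p - 1) * vstar ^ m := by
      linarith
    simp only [Matrix.cons_val', Matrix.cons_val_zero, Matrix.empty_val',
      Matrix.cons_val_fin_one, Matrix.of_apply]
    rw [h1, hsplit]; ring
  have hJ22 : J 1 1 = (m - 1) * d := by
    rw [hJ]
    have h2 : e * ustar ^ p * vstar ^ (m - 1) = d := by linarith
    simp only [Matrix.cons_val', Matrix.cons_val_one, Matrix.head_cons,
      Matrix.empty_val', Matrix.cons_val_fin_one, Matrix.of_apply, Matrix.head_fin_const]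
    linear_combination m * h2

  have hJ11neg : J 0 0 < 0 := by
    rw [hJ11]
    have : c * (1 - p) * ustar ^ (p - 2) * vstar ^ m - b < 0 := by linarith
    exact mul_neg_of_neg_of_pos this hu
  have hJ22neg : J 1 1 < 0 := by
    rw [hJ22]
    exact mul_neg_of_neg_of_pos (by linarith) hd
  have hJ12neg : J 0 1 < 0 := by
    rw [hJ]
    simp only [Matrix.cons_val', Matrix.cons_val_one, Matrix.head_cons,
      Matrix.empty_val', Matrix.cons_val_fin_one, Matrix.cons_val_zero, Matrix.of_apply]
    have h1 : -(k * a * ustar) / (1 + k * vstar) ^ 2 ≤ 0 := by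
      apply div_nonpos_of_nonpos_of_nonneg
      · nlinarith [mul_nonneg (mul_nonneg hk ha.le) hu.le]
      · positivity
    have h2 : (0:ℝ) < c * m * ustar ^ p * vstar ^ (m - 1) := by positivity
    linarith
  have hJ21pos : 0 < J 1 0 := by
    rw [hJ]
    simp only [Matrix.cons_val', Matrix.cons_val_one, Matrix.head_cons,
      Matrix.empty_val', Matrix.cons_val_fin_one, Matrix.cons_val_zero, Matrix.of_apply,
      Matrix.head_fin_const]
    positivity
  have htr : J.trace = J 0 0 + J 1 1 := Matrix.trace_fin_two J
  have hdet : J.det = J 0 0 * J 1 1 - J 0 1 * J 1 0 := Matrix.det_fin_two J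
  have hT : J.trace < 0 := by rw [htr]; linarith
  have hD : 0 < J.det := by
    rw [hdet]
    nlinarith
  exact ⟨hT, hD, fun z hz => rh_aux _ _ hT hD z hz⟩
end

section
/- Let a, b, c, d, e > 0, k ≥ 0, 0 < p < 1, 0 < m < 1, and let (u*, v*) with u* > 0, v* > 0 be a coexistence equilibrium, i.e., a/(1+k·v*) − b·u* − c·u*^(p−1)·v*^m = 0 and −d + e·u*^p·v*^(m−1) = 0. Write g₁ᵤ, g₁ᵥ for the partial derivatives of g₁(u,v) = a/(1+k·v) − b·u − c·u^(p−1)·v^m at (u*, v*) and g₂ᵤ, g₂ᵥ for those of g₂(u,v) = −d + e·u^p·v^(m−1) at (u*, v*). Assume b < c·(1−p)·u*^(p−2)·v*^m and that the predator nullcline slope is smaller than the prey nullcline slope at the equilibrium, i.e., −g₂ᵤ/g₂ᵥ < −g₁ᵤ/g₁ᵥ. Then det(J) < 0, where J = [[u*·g₁ᵤ, u*·g₁ᵥ],[v*·g₂ᵤ, v*·g₂ᵥ]], and the characteristic polynomial z² − trace(J)·z + det(J) has two real roots, one strictly positive and one strictly negative; i.e., the equilibrium is a saddle point. -/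
/-!
A negative Jacobian determinant makes the equilibrium a saddle, since the characteristic
polynomial `z² - T z + D` with `D < 0` has roots of opposite sign. Both `v`-derivatives
`g₁ᵥ`, `g₂ᵥ` are negative (fear and predation only lower prey growth as `v` grows, and
`m - 1 < 0`), so clearing these denominators turns the nullcline slope comparison into
`g₁ᵤ g₂ᵥ - g₁ᵥ g₂ᵤ < 0`, and `det J = u* v* (g₁ᵤ g₂ᵥ - g₁ᵥ g₂ᵤ)`.
-/

theorem exists_neg_pos_roots_of_neg (T D : ℝ) (hD : D < 0) :
    ∃ z₁ z₂ : ℝ, z₁ < 0 ∧ 0 < z₂ ∧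
      ∀ z : ℝ, z ^ 2 - T * z + D = 0 ↔ (z = z₁ ∨ z = z₂) := by
  set s := √(T ^ 2 - 4 * D)
  have hdiscrim : discrim 1 (-T) D = s * s := by
    rw [discrim, Real.mul_self_sqrt (by nlinarith [sq_nonneg T])]
    ring
  have hTs : |T| < s := (Real.lt_sqrt (abs_nonneg T)).2 (by rw [sq_abs]; linarith)
  obtain ⟨hsT, hTs⟩ := abs_lt.1 hTs
  refine ⟨(T - s) / 2, (T + s) / 2, by linarith, by linarith, fun z => ?_⟩
  have hroots := quadratic_eq_zero_iff one_ne_zero hdiscrim z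
  simp only [neg_neg, mul_one, one_mul] at hroots
  rw [sq, sub_eq_add_neg, ← neg_mul, hroots, add_comm T s, Or.comm]

theorem mul_sub_mul_neg_of_neg_div_lt_neg_div {a b c d : ℝ} (hb : b < 0) (hd : d < 0)
    (h : -c / d < -a / b) : a * d - b * c < 0 := by
  rw [neg_div, neg_div, ← div_neg, ← div_neg, div_lt_div_iff₀ (neg_pos.2 hd) (neg_pos.2 hb)] at h
  linarith

theorem deriv_prey_growth_predator_neg {a b c k p m u v : ℝ} (ha : 0 ≤ a) (hc : 0 < c)
    (hk : 0 ≤ k) (hm : 0 < m) (hu : 0 < u) (hv : 0 < v) :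
    deriv (fun w : ℝ => a / (1 + k * w) - b * u - c * u ^ (p - 1) * w ^ m) v < 0 := by
  have hkv : 0 < 1 + k * v := by positivity
  have hfear : HasDerivAt (fun w : ℝ => a / (1 + k * w)) (-(a * k) / (1 + k * v) ^ 2) v := by
    have h := (hasDerivAt_const v a).div (((hasDerivAt_id v).const_mul k).const_add 1) hkv.ne'
    simpa [Pi.div_def] using h
  have hpred : HasDerivAt (fun w : ℝ => w ^ m) (m * v ^ (m - 1)) v :=
    Real.hasDerivAt_rpow_const (Or.inl hv.ne')
  have hderiv : HasDerivAt (fun w : ℝ => a / (1 + k * w) - b * u - c * u ^ (p - 1) * w ^ m)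
      (-(a * k) / (1 + k * v) ^ 2 - c * u ^ (p - 1) * (m * v ^ (m - 1))) v :=
    (hfear.sub_const (b * u)).sub (hpred.const_mul (c * u ^ (p - 1)))
  rw [hderiv.deriv]
  have hfear_nonpos : -(a * k) / (1 + k * v) ^ 2 ≤ 0 :=
    div_nonpos_of_nonpos_of_nonneg (neg_nonpos.2 (mul_nonneg ha hk)) (sq_nonneg _)
  have hpred_pos : 0 < c * u ^ (p - 1) * (m * v ^ (m - 1)) := by positivity
  linarith

theorem deriv_predator_growth_predator_neg {d e m u p v : ℝ} (he : 0 < e) (hm1 : m < 1)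
    (hu : 0 < u) (hv : 0 < v) :
    deriv (fun w : ℝ => -d + e * u ^ p * w ^ (m - 1)) v < 0 := by
  have h : HasDerivAt (fun w : ℝ => w ^ (m - 1)) ((m - 1) * v ^ (m - 1 - 1)) v :=
    Real.hasDerivAt_rpow_const (Or.inl hv.ne')
  rw [((h.const_mul (e * u ^ p)).const_add (-d)).deriv]
  have : 0 < e * u ^ p * v ^ (m - 1 - 1) := by positivity
  nlinarith

theorem coexistence_saddle_general
    (a b c d e k p m ustar vstar : ℝ)
    (ha : 0 < a) (hc : 0 < c) (he : 0 < e) (hk : 0 ≤ k)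
    (hm : 0 < m) (hm1 : m < 1)
    (hu : 0 < ustar) (hv : 0 < vstar)
    (g1u g1v g2u g2v : ℝ)
    (hg1v : g1v = deriv (fun w : ℝ =>
      a / (1 + k * w) - b * ustar - c * ustar ^ (p - 1) * w ^ m) vstar)
    (hg2v : g2v = deriv (fun w : ℝ => -d + e * ustar ^ p * w ^ (m - 1)) vstar)
    (hslope : -g2u / g2v < -g1u / g1v)
    (J : Matrix (Fin 2) (Fin 2) ℝ)
    (hJ : J = !![ustar * g1u, ustar * g1v; vstar * g2u, vstar * g2v]) :
    J.det < 0 ∧ ∃ z₁ z₂ : ℝ, z₁ < 0 ∧ 0 < z₂ ∧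
      ∀ z : ℝ, z ^ 2 - J.trace * z + J.det = 0 ↔ (z = z₁ ∨ z = z₂) := by
  have hg1v_neg : g1v < 0 := hg1v ▸ deriv_prey_growth_predator_neg ha.le hc hk hm hu hv
  have hg2v_neg : g2v < 0 := hg2v ▸ deriv_predator_growth_predator_neg he hm1 hu hv
  have hcross := mul_sub_mul_neg_of_neg_div_lt_neg_div hg1v_neg hg2v_neg hslope
  have hdet : J.det = ustar * vstar * (g1u * g2v - g1v * g2u) := by
    rw [hJ, Matrix.det_fin_two_of]
    ring
  have hdet_neg : J.det < 0 := hdet ▸ mul_neg_of_pos_of_neg (mul_pos hu hv) hcross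
  exact ⟨hdet_neg, exists_neg_pos_roots_of_neg _ _ hdet_neg⟩

/-- At a coexistence equilibrium `(u*, v*)` of the fear model with
`b < c·(1-p)·u*^(p-2)·v*^m` and predator nullcline slope smaller than prey nullcline
slope, the Jacobian `J = [[u*·g₁ᵤ, u*·g₁ᵥ],[v*·g₂ᵤ, v*·g₂ᵥ]]` has `det J < 0`, and the
characteristic polynomial `z² - trace(J)·z + det(J)` has two real roots, one strictly
positive and one strictly negative: the equilibrium is a saddle. -/
theorem coexistence_saddle
    (a b c d e k p m ustar vstar : ℝ)
    (ha : 0 < a) (hb : 0 < b) (hc : 0 < c) (hd : 0 < d) (he : 0 < e) (hk : 0 ≤ k)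
    (hp : 0 < p) (hp1 : p < 1) (hm : 0 < m) (hm1 : m < 1)
    (hu : 0 < ustar) (hv : 0 < vstar)
    (heq1 : a / (1 + k * vstar) - b * ustar - c * ustar ^ (p - 1) * vstar ^ m = 0)
    (heq2 : -d + e * ustar ^ p * vstar ^ (m - 1) = 0)
    (g1u g1v g2u g2v : ℝ)
    (hg1u : g1u = deriv (fun w : ℝ =>
      a / (1 + k * vstar) - b * w - c * w ^ (p - 1) * vstar ^ m) ustar)
    (hg1v : g1v = deriv (fun w : ℝ =>
      a / (1 + k * w) - b * ustar - c * ustar ^ (p - 1) * w ^ m) vstar)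
    (hg2u : g2u = deriv (fun w : ℝ => -d + e * w ^ p * vstar ^ (m - 1)) ustar)
    (hg2v : g2v = deriv (fun w : ℝ => -d + e * ustar ^ p * w ^ (m - 1)) vstar)
    (hbc : b < c * (1 - p) * ustar ^ (p - 2) * vstar ^ m)
    (hslope : -g2u / g2v < -g1u / g1v)
    (J : Matrix (Fin 2) (Fin 2) ℝ)
    (hJ : J = !![ustar * g1u, ustar * g1v; vstar * g2u, vstar * g2v]) :
    J.det < 0 ∧ ∃ z₁ z₂ : ℝ, z₁ < 0 ∧ 0 < z₂ ∧
      ∀ z : ℝ, z ^ 2 - J.trace * z + J.det = 0 ↔ (z = z₁ ∨ z = z₂) :=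
  coexistence_saddle_general a b c d e k p m ustar vstar ha hc he hk hm hm1 hu hv g1u g1v g2u g2v
    hg1v hg2v hslope J hJ
end

section
/- Let a, b, c, d, e > 0, k > 0, v₀ > 0, 0 < p < 1, 0 < m < 1, and T > 0. Suppose u, v : [0, T] → ℝ are differentiable, satisfy du/dt = a·u/(1+k·v) − b·u² − c·u^p·v^m on [0, T], and for all t ∈ [0, T]: 0 < u(t) ≤ a and v(t) ≥ v₀·e^(−d·t). Then for all t ∈ [0, T], u'(t) ≤ (a²/(k·v₀))·e^(d·t) − c·v₀^m·e^(−m·d·t)·u(t)^p. -/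
/-- Key differential inequality for fear-driven extinction: if on
`[0, T]` the prey satisfies the fear equation with `0 < u t ≤ a` and the predator obeys
the lower bound `v t ≥ v₀·e^(-d·t)`, then
`u'(t) ≤ (a²/(k·v₀))·e^(d·t) - c·v₀^m·e^(-m·d·t)·u(t)^p` on `[0, T]`. -/
theorem fear_extinction_differential_inequality
    (a b c d e k v₀ p m T : ℝ)
    (ha : 0 < a) (hb : 0 < b) (hc : 0 < c) (hd : 0 < d) (he : 0 < e) (hk : 0 < k)
    (hv₀ : 0 < v₀) (hp : 0 < p) (hp1 : p < 1) (hm : 0 < m) (hm1 : m < 1) (hT : 0 < T)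
    (u v : ℝ → ℝ)
    (hu' : ∀ t ∈ Set.Icc (0 : ℝ) T,
      HasDerivAt u (a * u t / (1 + k * v t) - b * u t ^ 2 - c * u t ^ p * v t ^ m) t)
    (hu_pos : ∀ t ∈ Set.Icc (0 : ℝ) T, 0 < u t)
    (hu_le : ∀ t ∈ Set.Icc (0 : ℝ) T, u t ≤ a)
    (hv_lb : ∀ t ∈ Set.Icc (0 : ℝ) T, v₀ * Real.exp (-d * t) ≤ v t) :
    ∀ t ∈ Set.Icc (0 : ℝ) T,
      deriv u t ≤ (a ^ 2 / (k * v₀)) * Real.exp (d * t)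
        - c * v₀ ^ m * Real.exp (-(m * d * t)) * u t ^ p := by
  intro t ht
  rw [(hu' t ht).deriv]
  have hvlb := hv_lb t ht
  have hwpos : 0 < v₀ * Real.exp (-d * t) := mul_pos hv₀ (Real.exp_pos _)
  have hvpos : 0 < v t := lt_of_lt_of_le hwpos hvlb
  have hupos := hu_pos t ht
  -- First term bound
  have h1 : a * u t / (1 + k * v t) ≤ (a ^ 2 / (k * v₀)) * Real.exp (d * t) := by
    have hkv : 0 < k * v t := mul_pos hk hvpos
    have hden : 0 < 1 + k * v t := by linarith
    have step1 : a * u t / (1 + k * v t) ≤ a * a / (k * v t) := by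
      apply div_le_div₀ (by positivity) (by nlinarith [hu_le t ht]) hkv (by linarith)
    have step2 : a * a / (k * v t) ≤ a * a / (k * (v₀ * Real.exp (-d * t))) := by
      apply div_le_div_of_nonneg_left (by positivity) (by positivity)
      exact mul_le_mul_of_nonneg_left hvlb hk.le
    have heq : a * a / (k * (v₀ * Real.exp (-d * t)))
        = (a ^ 2 / (k * v₀)) * Real.exp (d * t) := by
      rw [neg_mul, Real.exp_neg]
      field_simp
    linarith [step1, step2, heq ▸ step2]
  -- Third term bound
  have h3 : c * v₀ ^ m * Real.exp (-(m * d * t)) * u t ^ p ≤ c * u t ^ p * v t ^ m := by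
    have hrw : (v₀ * Real.exp (-d * t)) ^ m = v₀ ^ m * Real.exp (-(m * d * t)) := by
      rw [Real.mul_rpow hv₀.le (Real.exp_pos _).le, ← Real.exp_mul]
      ring_nf
    have hmono : (v₀ * Real.exp (-d * t)) ^ m ≤ v t ^ m :=
      Real.rpow_le_rpow hwpos.le hvlb hm.le
    rw [hrw] at hmono
    have hup : 0 < u t ^ p := Real.rpow_pos_of_pos hupos p
    calc c * v₀ ^ m * Real.exp (-(m * d * t)) * u t ^ p
        = c * u t ^ p * (v₀ ^ m * Real.exp (-(m * d * t))) := by ring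
      _ ≤ c * u t ^ p * v t ^ m := by
          exact mul_le_mul_of_nonneg_left hmono (by positivity)
  have h2 : 0 ≤ b * u t ^ 2 := by positivity
  linarith
end

section
/- Let a, b, c, d, e, q > 0, k ≥ 0, 0 < p < 1, 0 < m < 1, 0 < r ≤ 1, and let (u*, v*) with u* > 0, v* > 0 be a coexistence equilibrium of the harvesting model, i.e., a/(1+k·v*) − b·u* − c·u*^(p−1)·v*^m = 0 and −d − q·v*^(r−1) + e·u*^p·v*^(m−1) = 0. Then the (2,2)-entry of the Jacobian of the harvesting model at (u*, v*) satisfies c₂₂ = −d − q·r·v*^(r−1) + e·m·u*^p·v*^(m−1) = −d·(1−m) − q·(r−m)·v*^(r−1); in particular, if r ≥ m, then c₂₂ < 0. -/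
/-- At a coexistence equilibrium `(u*, v*)` of the harvesting model,
the (2,2)-Jacobian entry satisfies
`c₂₂ = -d - q·r·v*^(r-1) + e·m·u*^p·v*^(m-1) = -d·(1-m) - q·(r-m)·v*^(r-1)`;
in particular, if `r ≥ m` then `c₂₂ < 0`. -/
theorem harvesting_c22_identity
    (a b c d e q k p m r ustar vstar : ℝ)
    (ha : 0 < a) (hb : 0 < b) (hc : 0 < c) (hd : 0 < d) (he : 0 < e) (hq : 0 < q)
    (hk : 0 ≤ k) (hp : 0 < p) (hp1 : p < 1) (hm : 0 < m) (hm1 : m < 1)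
    (hr : 0 < r) (hr1 : r ≤ 1)
    (hu : 0 < ustar) (hv : 0 < vstar)
    (heq1 : a / (1 + k * vstar) - b * ustar - c * ustar ^ (p - 1) * vstar ^ m = 0)
    (heq2 : -d - q * vstar ^ (r - 1) + e * ustar ^ p * vstar ^ (m - 1) = 0) :
    (-d - q * r * vstar ^ (r - 1) + e * m * ustar ^ p * vstar ^ (m - 1)
      = -d * (1 - m) - q * (r - m) * vstar ^ (r - 1)) ∧
    (m ≤ r →
      -d - q * r * vstar ^ (r - 1) + e * m * ustar ^ p * vstar ^ (m - 1) < 0) := by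
  have key : e * ustar ^ p * vstar ^ (m - 1) = d + q * vstar ^ (r - 1) := by linarith
  have hvr : (0:ℝ) < vstar ^ (r - 1) := Real.rpow_pos_of_pos hv _
  constructor
  · linear_combination m * key
  · intro hmr
    nlinarith [key, mul_nonneg (mul_nonneg hq.le (sub_nonneg.mpr hmr)) hvr.le]
end
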